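/- Let (X,d) be a metric space, μ a Borel measure on X with μ(B(x,r)) < ∞ for all r > 0, x ∈ X, N > 1 a real number, and κ_∞ > 0. Assume: (i) μ(B(x,R)) ≤ (R/r)^N · μ(B(x,r)) for all 0 < r ≤ R < ∞; (ii) the function r ↦ s(x,r)/r^{N−1} is non-increasing on (0,∞); (iii) μ(B(x,R)) = ∫₀^R s(x,t) dt for every R > 0; (iv) liminf_{r→∞} μ(B(x,r))/r^N = κ_∞. Then liminf_{r→∞} s(x,r)/(N r^{N−1}) = κ_∞. -/
import Mathlib

open MeasureTheory Metric Filter Set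

/-- The Minkowski content of the ball `B(x,r)`:
`s(x,r) = limsup_{δ→0⁺} (1/δ) μ(B(x,r+δ) \ B(x,r))`. -/
noncomputable def minkowskiContent {X : Type*} [MetricSpace X] [MeasurableSpace X]
    (μ : Measure X) (x : X) (r : ℝ) : ℝ :=
  limsup (fun δ : ℝ => (μ (ball x (r + δ) \ ball x r)).toReal / δ) (nhdsWithin 0 (Ioi 0))

lemma minkowskiContent_nonneg {X : Type*} [MetricSpace X] [MeasurableSpace X]
    (μ : Measure X) (x : X) (r : ℝ) : 0 ≤ minkowskiContent μ x r := by
  rw [minkowskiContent, limsup_eq]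
  apply Real.sInf_nonneg
  intro a ha
  have ha' : ∀ᶠ δ in nhdsWithin (0:ℝ) (Ioi 0),
      (μ (ball x (r + δ) \ ball x r)).toReal / δ ≤ a := ha
  obtain ⟨δ, h1, h2⟩ := (ha'.and self_mem_nhdsWithin).exists
  exact le_trans (div_nonneg ENNReal.toReal_nonneg (le_of_lt h2)) h1

theorem stmt_2 {X : Type*} [MetricSpace X] [MeasurableSpace X] [BorelSpace X]
    (μ : Measure X) (x : X) (N : ℝ) (hN : 1 < N) (kinf : ℝ) (hkinf : 0 < kinf)
    (hfin : ∀ (z : X) (r : ℝ), 0 < r → μ (ball z r) < ⊤)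
    (hdoub : ∀ r R : ℝ, 0 < r → r ≤ R →
      μ (ball x R) ≤ ENNReal.ofReal ((R / r) ^ N) * μ (ball x r))
    (hanti : AntitoneOn (fun r : ℝ => minkowskiContent μ x r / r ^ (N - 1)) (Ioi 0))
    (hvol : ∀ R : ℝ, 0 < R →
      (μ (ball x R)).toReal = ∫ t in (0:ℝ)..R, minkowskiContent μ x t)
    (hlim : liminf (fun r : ℝ => (μ (ball x r)).toReal / r ^ N) atTop = kinf) :
    liminf (fun r : ℝ => minkowskiContent μ x r / (N * r ^ (N - 1))) atTop = kinf := by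
  set s : ℝ → ℝ := minkowskiContent μ x with hs
  have hNpos : (0 : ℝ) < N := by linarith
  by_cases hint : ∀ R : ℝ, 0 < R → IntervalIntegrable s volume 0 R
  · -- main case
    have hsnn : ∀ r, 0 ≤ s r := fun r => minkowskiContent_nonneg μ x r
    set F : ℝ → ℝ := fun r => s r / r ^ (N - 1) with hF
    have hFnn : ∀ r : ℝ, 0 ≤ r → 0 ≤ F r := fun r hr =>
      div_nonneg (hsnn r) (Real.rpow_nonneg hr _)
    -- the antitone function F has a limit L at infinity
    set G : ℝ → ℝ := fun r => F (max r 1) with hG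
    have hGanti : Antitone G := fun a b hab =>
      hanti (mem_Ioi.mpr (lt_of_lt_of_le one_pos (le_max_right a 1)))
        (mem_Ioi.mpr (lt_of_lt_of_le one_pos (le_max_right b 1)))
        (max_le_max hab le_rfl)
    have hGbdd : BddBelow (range G) := by
      refine ⟨0, ?_⟩
      rintro y ⟨r, rfl⟩
      exact hFnn _ (le_trans zero_le_one (le_max_right r 1))
    set L : ℝ := ⨅ r, G r with hL
    have hGtend : Tendsto G atTop (nhds L) := tendsto_atTop_ciInf hGanti hGbdd
    have hFG : ∀ᶠ r : ℝ in atTop, G r = F r := by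
      filter_upwards [eventually_ge_atTop (1:ℝ)] with r hr
      simp [hG, max_eq_left hr]
    have hFtend : Tendsto F atTop (nhds L) := hGtend.congr' hFG
    -- the target liminf equals L / N
    have htarget : liminf (fun r : ℝ => s r / (N * r ^ (N - 1))) atTop = L / N := by
      have : (fun r : ℝ => s r / (N * r ^ (N - 1))) = fun r => F r / N := by
        funext r
        rw [hF]
        rw [mul_comm, ← div_div]
      rw [this]
      exact (hFtend.div_const N).liminf_eq
    rw [htarget]
    -- key integral estimates
    have key : ∀ r₀ R : ℝ, 0 < r₀ → r₀ ≤ R →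
        (μ (ball x r₀)).toReal + F R * ((R ^ N - r₀ ^ N) / N) ≤ (μ (ball x R)).toReal ∧
        (μ (ball x R)).toReal ≤ (μ (ball x r₀)).toReal + F r₀ * ((R ^ N - r₀ ^ N) / N) := by
      intro r₀ R h0 hle
      have hR0 : 0 < R := lt_of_lt_of_le h0 hle
      have hii : IntervalIntegrable s volume r₀ R :=
        (hint R hR0).mono_set (uIcc_subset_uIcc
          (by rw [uIcc_of_le hR0.le]; exact ⟨h0.le, hle⟩)
          (by rw [uIcc_of_le hR0.le]; exact ⟨hR0.le, le_rfl⟩))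
      have hrpow : ∀ c : ℝ, IntervalIntegrable (fun t : ℝ => c * t ^ (N - 1)) volume r₀ R := by
        intro c
        apply ContinuousOn.intervalIntegrable
        apply continuousOn_const.mul
        apply ContinuousOn.rpow_const continuousOn_id
        intro t ht
        rw [uIcc_of_le hle] at ht
        exact Or.inl (ne_of_gt (lt_of_lt_of_le h0 ht.1))
      have hpt : ∀ t ∈ Icc r₀ R, F R * t ^ (N - 1) ≤ s t ∧ s t ≤ F r₀ * t ^ (N - 1) := by
        intro t ht
        have ht0 : 0 < t := lt_of_lt_of_le h0 ht.1
        have htp : (0:ℝ) < t ^ (N - 1) := Real.rpow_pos_of_pos ht0 _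
        have hst : s t = F t * t ^ (N - 1) := (div_mul_cancel₀ _ htp.ne').symm
        constructor
        · rw [hst]
          exact mul_le_mul_of_nonneg_right
            (hanti (mem_Ioi.mpr ht0) (mem_Ioi.mpr hR0) ht.2) htp.le
        · rw [hst]
          exact mul_le_mul_of_nonneg_right
            (hanti (mem_Ioi.mpr h0) (mem_Ioi.mpr ht0) ht.1) htp.le
      have hval : ∀ c : ℝ, (∫ t in r₀..R, c * t ^ (N - 1)) = c * ((R ^ N - r₀ ^ N) / N) := by
        intro c
        rw [intervalIntegral.integral_const_mul, integral_rpow (Or.inl (by linarith))]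
        have hN1 : N - 1 + 1 = N := by ring
        rw [hN1]
      have hsplit : (μ (ball x R)).toReal = (μ (ball x r₀)).toReal + ∫ t in r₀..R, s t := by
        rw [hvol R hR0, hvol r₀ h0,
          intervalIntegral.integral_add_adjacent_intervals (hint r₀ h0) hii]
      constructor
      · rw [hsplit]
        have := intervalIntegral.integral_mono_on hle (hrpow (F R)) hii
          (fun t ht => (hpt t ht).1)
        rw [hval (F R)] at this
        linarith
      · rw [hsplit]
        have := intervalIntegral.integral_mono_on hle hii (hrpow (F r₀))
          (fun t ht => (hpt t ht).2)
        rw [hval (F r₀)] at this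
        linarith
    have hRNtend : Tendsto (fun R : ℝ => R ^ N) atTop atTop := tendsto_rpow_atTop hNpos
    have hdiv0 : ∀ c : ℝ, Tendsto (fun R : ℝ => c / R ^ N) atTop (nhds 0) :=
      fun c => Tendsto.div_atTop tendsto_const_nhds hRNtend
    set q : ℝ → ℝ → ℝ := fun r₀ R => (μ (ball x r₀)).toReal / R ^ N
        + F r₀ / N * (1 - r₀ ^ N / R ^ N) with hq
    have hqtend : ∀ r₀ : ℝ, Tendsto (q r₀) atTop (nhds (F r₀ / N)) := by
      intro r₀
      have h1 : Tendsto (fun R : ℝ => (μ (ball x r₀)).toReal / R ^ N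
          + F r₀ / N * (1 - r₀ ^ N / R ^ N)) atTop (nhds (0 + F r₀ / N * (1 - 0))) :=
        (hdiv0 _).add ((((tendsto_const_nhds : Tendsto (fun _ : ℝ => (1:ℝ)) atTop
          (nhds 1)).sub (hdiv0 (r₀ ^ N)))).const_mul (F r₀ / N))
      simpa using h1
    have hub : ∀ r₀ : ℝ, 0 < r₀ → ∀ᶠ R : ℝ in atTop,
        (μ (ball x R)).toReal / R ^ N ≤ q r₀ R := by
      intro r₀ h0
      filter_upwards [eventually_ge_atTop r₀] with R hR
      have hR0 : 0 < R := lt_of_lt_of_le h0 hR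
      have hRN : (0:ℝ) < R ^ N := Real.rpow_pos_of_pos hR0 _
      have h2 := (key r₀ R h0 hR).2
      have h3 : (μ (ball x R)).toReal / R ^ N
          ≤ ((μ (ball x r₀)).toReal + F r₀ * ((R ^ N - r₀ ^ N) / N)) / R ^ N := by
        gcongr
      refine h3.trans (le_of_eq ?_)
      rw [hq]
      field_simp
    have hbh : IsBoundedUnder (fun a b : ℝ => a ≥ b) atTop
        (fun R : ℝ => (μ (ball x R)).toReal / R ^ N) := by
      refine ⟨0, ?_⟩
      rw [eventually_map]
      filter_upwards [eventually_ge_atTop (0:ℝ)] with R hR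
      exact div_nonneg ENNReal.toReal_nonneg (Real.rpow_nonneg hR _)
    -- Claim A : kinf ≤ F r₀ / N for every r₀ > 0
    have claimA : ∀ r₀ : ℝ, 0 < r₀ → kinf ≤ F r₀ / N := by
      intro r₀ h0
      have hcq : IsCoboundedUnder (fun a b : ℝ => a ≥ b) atTop (q r₀) :=
        (hqtend r₀).isBoundedUnder_le.isCoboundedUnder_ge
      calc kinf = liminf (fun r : ℝ => (μ (ball x r)).toReal / r ^ N) atTop := hlim.symm
        _ ≤ liminf (q r₀) atTop := liminf_le_liminf (hub r₀ h0) hbh hcq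
        _ = F r₀ / N := (hqtend r₀).liminf_eq
    have hA : kinf ≤ L / N := by
      apply ge_of_tendsto (hFtend.div_const N)
      filter_upwards [eventually_gt_atTop (0:ℝ)] with r hr
      exact claimA r hr
    -- Claim B : L / N ≤ kinf
    have hB : L / N ≤ kinf := by
      set p : ℝ → ℝ := fun R => F R / N * (1 - (R ^ N)⁻¹) with hp
      have hptend : Tendsto p atTop (nhds (L / N)) := by
        have h1 : Tendsto (fun R : ℝ => F R / N * (1 - 1 / R ^ N)) atTop
            (nhds (L / N * (1 - 0))) :=
          (hFtend.div_const N).mul (((tendsto_const_nhds : Tendsto (fun _ : ℝ => (1:ℝ))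
            atTop (nhds 1)).sub (hdiv0 1)))
        simpa [one_div] using h1
      have hev : ∀ᶠ R : ℝ in atTop,
          p R ≤ (μ (ball x R)).toReal / R ^ N := by
        filter_upwards [eventually_ge_atTop (1:ℝ)] with R hR
        have hR0 : 0 < R := lt_of_lt_of_le one_pos hR
        have hRN : (0:ℝ) < R ^ N := Real.rpow_pos_of_pos hR0 _
        have h1 := (key 1 R one_pos hR).1
        have h0 : (0:ℝ) ≤ (μ (ball x 1)).toReal := ENNReal.toReal_nonneg
        have h2 : F R * ((R ^ N - (1:ℝ) ^ N) / N) ≤ (μ (ball x R)).toReal := by linarith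
        rw [Real.one_rpow] at h2
        have h3 : F R * ((R ^ N - 1) / N) / R ^ N ≤ (μ (ball x R)).toReal / R ^ N := by
          gcongr
        refine le_trans (le_of_eq ?_) h3
        rw [hp]
        field_simp
        try ring
      have hbp : IsBoundedUnder (fun a b : ℝ => a ≥ b) atTop p :=
        hptend.isBoundedUnder_ge
      have hch : IsCoboundedUnder (fun a b : ℝ => a ≥ b) atTop
          (fun R : ℝ => (μ (ball x R)).toReal / R ^ N) :=
        (((hqtend 1).isBoundedUnder_le).mono_le (hub 1 one_pos)).isCoboundedUnder_ge
      calc L / N = liminf p atTop := hptend.liminf_eq.symm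
        _ ≤ liminf (fun r : ℝ => (μ (ball x r)).toReal / r ^ N) atTop :=
            liminf_le_liminf hev hbp hch
        _ = kinf := hlim
    linarith
  · -- degenerate case: s not locally integrable near 0 forces μ(B R) = 0
    push_neg at hint
    obtain ⟨R₀, hR₀pos, hni⟩ := hint
    have hzero : ∀ᶠ R in atTop, (μ (ball x R)).toReal / R ^ N = 0 := by
      filter_upwards [eventually_ge_atTop R₀] with R hR
      have hne : ¬ IntervalIntegrable s volume 0 R := fun h =>
        hni (h.mono_set (uIcc_subset_uIcc left_mem_uIcc
          (by rw [uIcc_of_le (le_trans hR₀pos.le hR)]; exact ⟨hR₀pos.le, hR⟩)))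
      rw [hvol R (lt_of_lt_of_le hR₀pos hR), intervalIntegral.integral_undef hne, zero_div]
    have : liminf (fun r : ℝ => (μ (ball x r)).toReal / r ^ N) atTop = 0 := by
      rw [liminf_congr hzero]; exact liminf_const 0
    rw [this] at hlim; linarith
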